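/- Any two fundamental domains for an action of a group G on a simplicial complex K by exchangeable vertices are simplicially isomorphic. -/

import Mathlib

variable {V : Type*}

def IsComplex (F : Set (Finset V)) : Prop :=
  (∀ s ∈ F, s.Nonempty) ∧ ∀ s ∈ F, ∀ t ⊆ s, t.Nonempty → t ∈ F

def IsAuto [DecidableEq V] (F : Set (Finset V)) (φ : Equiv.Perm V) : Prop :=
  ∀ s : Finset V, s ∈ F ↔ s.image φ ∈ F

def IsExchange [DecidableEq V] (F : Set (Finset V)) (u v : V) (φ : Equiv.Perm V) : Prop :=
  IsAuto F φ ∧ φ u = v ∧ φ v = u ∧ ∀ w : V, w ≠ u → w ≠ v → φ w = w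

def Exchangeable [DecidableEq V] (F : Set (Finset V)) (u v : V) : Prop :=
  ∃ φ : Equiv.Perm V, IsExchange F u v φ

def vertices (F : Set (Finset V)) : Set V := {v | ({v} : Finset V) ∈ F}

def quotFaces (F : Set (Finset V)) (G : Subgroup (Equiv.Perm V)) : Set (Finset (Set V)) :=
  {S | ∃ s ∈ F, (↑S : Set (Set V)) = (fun v => MulAction.orbit (↥G) v) '' ↑s}

def ActsByExch [DecidableEq V] (F : Set (Finset V)) (G : Subgroup (Equiv.Perm V)) : Prop :=
  ∃ M : Set (Equiv.Perm V), G = Subgroup.closure M ∧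
    ∀ φ ∈ M, ∃ u v : V, u ≠ v ∧ IsExchange F u v φ

def fullSubFaces (F : Set (Finset V)) (W : Set V) : Set (Finset V) :=
  {s ∈ F | ↑s ⊆ W}

/-!
An exchange automorphism of `u` and `v` is the transposition `swap u v`, so `G` is generated by
transpositions and therefore contains `swap x y` whenever `x` and `y` lie in one orbit
(`swap_mem_closure_isSwap`). Composing such transpositions, any orbit-preserving assignment on
finitely many vertices from distinct orbits is realized by a single `g ∈ G`, and `g` is a
simplicial automorphism. Sending each vertex of `W₁` to the vertex of `W₂` in its orbit thus
carries full faces on `W₁` to faces on `W₂`, and the map back does the same.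
-/

open Equiv MulAction Set

section Transversal

variable {G α : Type*} [Group G] [MulAction G α] {X W W' : Set α}

theorem injOn_orbit_of_existsUnique (hW : W ⊆ X)
    (hrep : ∀ v ∈ X, ∃! x : α, x ∈ W ∧ x ∈ orbit G v) : InjOn (orbit G) W :=
  fun a ha b hb hab =>
    (hrep b (hW hb)).unique ⟨ha, hab ▸ mem_orbit_self a⟩ ⟨hb, mem_orbit_self b⟩

theorem leftInvOn_of_mem_orbit (hW : InjOn (orbit G) W) {f g : α → α}
    (hf : MapsTo f W W') (hg : MapsTo g W' W)
    (hfo : ∀ a ∈ W, f a ∈ orbit G a) (hgo : ∀ b ∈ W', g b ∈ orbit G b) :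
    LeftInvOn g f W :=
  fun a ha => hW (hg (hf ha)) ha
    ((orbit_eq_iff.2 (hgo _ (hf ha))).trans (orbit_eq_iff.2 (hfo a ha)))

end Transversal

theorem Set.LeftInvOn.finset_image {α β : Type*} [DecidableEq α] [DecidableEq β]
    {f : α → β} {g : β → α} {s : Set α} (h : LeftInvOn g f s) :
    LeftInvOn (Finset.image g) (Finset.image f) {u | ↑u ⊆ s} := fun u hu => by
  rw [Finset.image_image, Finset.image_congr (h.mono hu).eqOn, Finset.image_id]

section Swap

variable {α : Type*} [DecidableEq α] {S : Set (Perm α)}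

theorem exists_mem_closure_eqOn_of_isSwap (hS : ∀ σ ∈ S, σ.IsSwap) {s : Finset α}
    (hs : InjOn (orbit (Subgroup.closure S)) (s : Set α)) {τ : α → α}
    (hτ : ∀ a ∈ s, τ a ∈ orbit (Subgroup.closure S) a) :
    ∃ g ∈ Subgroup.closure S, EqOn g τ s := by
  induction s using Finset.induction_on with
  | empty => exact ⟨1, one_mem _, by simp⟩
  | insert a t hat ih =>
    rw [Finset.coe_insert] at hs
    obtain ⟨g, hg, hgτ⟩ := ih (hs.mono (subset_insert a _))
      fun b hb => hτ b (Finset.mem_insert_of_mem hb)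
    have hga : orbit (Subgroup.closure S) (g a) = orbit (Subgroup.closure S) a :=
      orbit_eq_iff.2 ⟨⟨g, hg⟩, rfl⟩
    have hτa : orbit (Subgroup.closure S) (τ a) = orbit (Subgroup.closure S) a :=
      orbit_eq_iff.2 (hτ a (Finset.mem_insert_self a t))
    have hswap : swap (τ a) (g a) ∈ Subgroup.closure S :=
      (swap_mem_closure_isSwap hS).2 (orbit_eq_iff.1 (hτa.trans hga.symm))
    refine ⟨swap (τ a) (g a) * g, mul_mem hswap hg, ?_⟩
    intro b hb
    rcases Finset.mem_insert.1 hb with rfl | hb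
    · exact swap_apply_right _ _
    · have hb_orbit : orbit (Subgroup.closure S) (τ b) ≠ orbit (Subgroup.closure S) a := by
        rw [orbit_eq_iff.2 (hτ b (Finset.mem_insert_of_mem hb))]
        exact fun h => hat (hs (mem_insert_of_mem a hb) (mem_insert a _) h ▸ hb)
      rw [Perm.mul_apply, hgτ hb]
      exact swap_apply_of_ne_of_ne (fun h => hb_orbit (h ▸ hτa))
        (fun h => hb_orbit (h ▸ hga))

end Swap

section Exchange

variable [DecidableEq V] {F : Set (Finset V)}

theorem IsExchange.eq_swap {u v : V} {φ : Perm V} (h : IsExchange F u v φ) :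
    φ = swap u v := by
  obtain ⟨-, hu, hv, hfix⟩ := h
  ext w
  by_cases hwu : w = u
  · subst hwu; rw [hu, swap_apply_left]
  by_cases hwv : w = v
  · subst hwv; rw [hv, swap_apply_right]
  rw [hfix w hwu hwv, swap_apply_of_ne_of_ne hwu hwv]

variable (F) in
def autGroup : Subgroup (Perm V) where
  carrier := {φ | IsAuto F φ}
  mul_mem' {φ ψ} hφ hψ s := by
    rw [Perm.coe_mul, ← Finset.image_image, ← hφ, ← hψ]
  one_mem' s := by simp
  inv_mem' {φ} hφ s := by
    rw [hφ (s.image ⇑φ⁻¹), Finset.image_image, ← Perm.coe_mul, mul_inv_cancel, Perm.coe_one,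
      Finset.image_id]

theorem mapsTo_image_fullSubFaces {S : Set (Perm V)} (hS : ∀ σ ∈ S, σ.IsSwap)
    (hSF : ∀ σ ∈ S, IsAuto F σ) {W W' : Set V} (hW : InjOn (orbit (Subgroup.closure S)) W)
    {f : V → V} (hf : MapsTo f W W') (hfo : ∀ a ∈ W, f a ∈ orbit (Subgroup.closure S) a) :
    MapsTo (Finset.image f) (fullSubFaces F W) (fullSubFaces F W') := by
  rintro s ⟨hsF, hsW⟩
  obtain ⟨g, hg, hgf⟩ :=
    exists_mem_closure_eqOn_of_isSwap hS (hW.mono hsW) fun a ha => hfo a (hsW ha)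
  have hauto : IsAuto F g := (Subgroup.closure_le (autGroup F)).2 hSF hg
  refine ⟨?_, ?_⟩
  · rw [← Finset.image_congr hgf]
    exact (hauto s).1 hsF
  · rw [Finset.coe_image]
    exact (hf.mono_left hsW).image_subset

end Exchange

theorem fundamentalDomains_iso_general [DecidableEq V] (F : Set (Finset V))
    (G : Subgroup (Equiv.Perm V)) (hG : ActsByExch F G)
    (W₁ W₂ : Set V) (hW₁ : W₁ ⊆ vertices F) (hW₂ : W₂ ⊆ vertices F)
    (hrep₁ : ∀ v ∈ vertices F, ∃! x : V, x ∈ W₁ ∧ x ∈ MulAction.orbit (↥G) v)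
    (hrep₂ : ∀ v ∈ vertices F, ∃! x : V, x ∈ W₂ ∧ x ∈ MulAction.orbit (↥G) v) :
    ∃ f : V → V, Set.BijOn f W₁ W₂ ∧
      Set.BijOn (fun s : Finset V => s.image f) (fullSubFaces F W₁) (fullSubFaces F W₂) := by
  obtain ⟨M, rfl, hM⟩ := hG
  have hswap : ∀ σ ∈ M, σ.IsSwap := fun σ hσ =>
    let ⟨u, v, huv, h⟩ := hM σ hσ
    ⟨u, v, huv, h.eq_swap⟩
  have hauto : ∀ σ ∈ M, IsAuto F σ := fun σ hσ =>
    let ⟨_, _, _, h⟩ := hM σ hσ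
    h.1
  have hinj₁ := injOn_orbit_of_existsUnique hW₁ hrep₁
  have hinj₂ := injOn_orbit_of_existsUnique hW₂ hrep₂
  choose! f hf hfo using fun a (ha : a ∈ W₁) => (hrep₂ a (hW₁ ha)).exists
  choose! g hg hgo using fun b (hb : b ∈ W₂) => (hrep₁ b (hW₂ hb)).exists
  have hinv : InvOn g f W₁ W₂ :=
    ⟨leftInvOn_of_mem_orbit hinj₁ hf hg hfo hgo, leftInvOn_of_mem_orbit hinj₂ hg hf hgo hfo⟩
  have hinv_faces : InvOn (Finset.image g) (Finset.image f)
      (fullSubFaces F W₁) (fullSubFaces F W₂) :=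
    ⟨hinv.1.finset_image.mono fun _ hs => hs.2, hinv.2.finset_image.mono fun _ hs => hs.2⟩
  exact ⟨f, hinv.bijOn hf hg, hinv_faces.bijOn (mapsTo_image_fullSubFaces hswap hauto hinj₁ hf hfo)
    (mapsTo_image_fullSubFaces hswap hauto hinj₂ hg hgo)⟩

/-- Any two fundamental domains for an action of `G` on a simplicial complex `F` by
exchangeable vertices are simplicially isomorphic. -/
theorem fundamentalDomains_iso [DecidableEq V] (F : Set (Finset V)) (hF : IsComplex F)
    (G : Subgroup (Equiv.Perm V)) (hG : ActsByExch F G)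
    (W₁ W₂ : Set V) (hW₁ : W₁ ⊆ vertices F) (hW₂ : W₂ ⊆ vertices F)
    (hrep₁ : ∀ v ∈ vertices F, ∃! x : V, x ∈ W₁ ∧ x ∈ MulAction.orbit (↥G) v)
    (hrep₂ : ∀ v ∈ vertices F, ∃! x : V, x ∈ W₂ ∧ x ∈ MulAction.orbit (↥G) v) :
    ∃ f : V → V, Set.BijOn f W₁ W₂ ∧
      Set.BijOn (fun s : Finset V => s.image f) (fullSubFaces F W₁) (fullSubFaces F W₂) :=
  fundamentalDomains_iso_general F G hG W₁ W₂ hW₁ hW₂ hrep₁ hrep₂
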